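/- arXiv:1311.5465 — 3 statements merged into one kernel-verified Lean document; each statement's English description precedes it below -/
import Mathlib

section
/- For every positive integer n, Σ_{d∣n} ((log d)² − (log d)(log(n/d))) = Σ_{d∣n} Λ(d)·log(d)·τ(n/d), where Λ is the von Mangoldt function and τ(m) is the number of divisors of m. -/
/-!
Write `L` for `log` as an arithmetic function and `f·g` for the pointwise product. Since
`log (a * b) = log a + log b`, multiplication by `L` is a derivation of Dirichlet convolution:
`L·(f * g) = (L·f) * g + f * (L·g)`. Applied to `L = Λ * ζ` it gives `L·L = (Λ·L) * ζ + Λ * L`, hence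
`(L·L) * ζ = (Λ·L) * (ζ * ζ) + L * L`. Evaluating at `n`, with `(ζ * ζ) m = τ m`, is the identity.
-/

open scoped ArithmeticFunction.zeta

namespace ArithmeticFunction

theorem mul_pmul_log (f g : ArithmeticFunction ℝ) :
    (f * g).pmul log = f.pmul log * g + f * g.pmul log := by
  ext n
  simp only [pmul_apply, add_apply, mul_apply, log_apply, Finset.sum_mul,
    ← Finset.sum_add_distrib]
  refine Finset.sum_congr rfl fun x hx => ?_
  obtain ⟨rfl, hn⟩ := Nat.mem_divisorsAntidiagonal.mp hx
  obtain ⟨ha, hb⟩ := mul_ne_zero_iff.mp hn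
  push_cast
  rw [Real.log_mul (by exact_mod_cast ha) (by exact_mod_cast hb)]
  ring

theorem log_pmul_log_mul_zeta :
    log.pmul log * ζ = pmul Λ log * (ζ * ζ) + log * log := by
  have h : log.pmul log = pmul Λ log * ζ + Λ * log := by
    nth_rewrite 1 [← vonMangoldt_mul_zeta]
    rw [mul_pmul_log, zeta_pmul]
  rw [h, ← vonMangoldt_mul_zeta]
  ring

theorem natCoe_zeta_mul_zeta_apply (n : ℕ) :
    ((ζ : ArithmeticFunction ℝ) * ζ) n = n.divisors.card := by
  rw [coe_zeta_mul_apply, Finset.card_eq_sum_ones, Nat.cast_sum]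
  refine Finset.sum_congr rfl fun i hi => ?_
  simp [(Nat.pos_of_mem_divisors hi).ne']

end ArithmeticFunction

open ArithmeticFunction

theorem aCoeff_eq_vonMangoldt_tau_general (n : ℕ) :
    ∑ d ∈ n.divisors, ((Real.log d) ^ 2 - Real.log d * Real.log ((n / d : ℕ) : ℝ)) =
      ∑ d ∈ n.divisors,
        ArithmeticFunction.vonMangoldt d * Real.log d * ((n / d : ℕ).divisors.card : ℝ) := by
  have h := DFunLike.congr_fun log_pmul_log_mul_zeta n
  rw [ArithmeticFunction.add_apply, coe_mul_zeta_apply, mul_apply, mul_apply,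
    Nat.sum_divisorsAntidiagonal (fun a b => log a * log b),
    Nat.sum_divisorsAntidiagonal (fun a b => pmul Λ log a * ((ζ : ArithmeticFunction ℝ) * ζ) b)]
    at h
  simp only [pmul_apply, log_apply, natCoe_zeta_mul_zeta_apply] at h
  rw [Finset.sum_sub_distrib, sub_eq_iff_eq_add]
  simpa only [sq] using h

/-- For every positive integer `n`,
`Σ_{d∣n} ((log d)² − (log d)(log(n/d))) = Σ_{d∣n} Λ(d)·log(d)·τ(n/d)`. -/
theorem aCoeff_eq_vonMangoldt_tau (n : ℕ) (hn : 0 < n) :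
    ∑ d ∈ n.divisors, ((Real.log d) ^ 2 - Real.log d * Real.log ((n / d : ℕ) : ℝ)) =
      ∑ d ∈ n.divisors,
        ArithmeticFunction.vonMangoldt d * Real.log d * ((n / d : ℕ).divisors.card : ℝ) :=
  aCoeff_eq_vonMangoldt_tau_general n
end

section
/- For every complex number s that is not an integer, ν(s) = χ(s)²·( ν(1−s) + ( ψ'(1−s) − (π/2)²·csc(πs/2)² )·ζ(1−s)² ), where ψ' is the derivative of the digamma function ψ = Γ'/Γ. -/
open Complex

/-- `ν(s) = ζ(s)·ζ''(s) − ζ'(s)²`. -/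
noncomputable def nu (s : ℂ) : ℂ :=
  riemannZeta s * iteratedDeriv 2 riemannZeta s - (deriv riemannZeta s) ^ 2

/-- `χ(s) = 2·(2π)^{s−1}·sin(πs/2)·Γ(1−s)`, the factor from the functional equation. -/
noncomputable def chi (s : ℂ) : ℂ :=
  2 * (2 * (Real.pi : ℂ)) ^ (s - 1) * Complex.sin ((Real.pi : ℂ) * s / 2) * Complex.Gamma (1 - s)

/-- The digamma function `ψ = Γ'/Γ`. -/
noncomputable def digamma (s : ℂ) : ℂ :=
  deriv Complex.Gamma s / Complex.Gamma s

/-!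
`ν = ζζ'' - ζ'²` is the self-Wronskian `W(f) = f f'' - f'²` of `ζ`, i.e. `f² (log f)''` with the
denominators cleared. Hence `W` obeys the product rule `W(fg) = g² W(f) + f² W(g)`, scales by `c²`
under `y ↦ c y`, commutes with `y ↦ 1 - y`, and kills exponentials. Applied to
`ζ(s) = χ(s) ζ(1 - s)` this gives `ν(s) = ζ(1 - s)² W(χ)(s) + χ(s)² ν(1 - s)`, and factor by factor
`W(χ) = χ² (log χ)'' = χ² (ψ'(1 - s) - (π/2)² csc²(πs/2))`.
-/

open Filter Topology

section SelfWronskian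

variable {𝕜 : Type*} [NontriviallyNormedField 𝕜]

noncomputable def selfWronskian (f : 𝕜 → 𝕜) (x : 𝕜) : 𝕜 :=
  f x * deriv (deriv f) x - deriv f x ^ 2

theorem Filter.EventuallyEq.selfWronskian_eq {f g : 𝕜 → 𝕜} {x : 𝕜} (h : f =ᶠ[𝓝 x] g) :
    selfWronskian f x = selfWronskian g x := by
  simp only [selfWronskian, h.eq_of_nhds, h.deriv_eq, h.deriv.deriv_eq]

theorem selfWronskian_const_mul (c : 𝕜) (f : 𝕜 → 𝕜) (x : 𝕜) :
    selfWronskian (fun y => c * f y) x = c ^ 2 * selfWronskian f x := by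
  simp only [selfWronskian, deriv_const_mul_field']
  ring

theorem selfWronskian_comp_const_mul (c : 𝕜) (f : 𝕜 → 𝕜) (x : 𝕜) :
    selfWronskian (fun y => f (c * y)) x = c ^ 2 * selfWronskian f (c * x) := by
  have h : deriv (fun y => f (c * y)) = fun y => c * deriv f (c * y) := by
    funext y; exact deriv_comp_mul_left c f y
  simp only [selfWronskian, h, deriv_const_mul_field', deriv_comp_mul_left, smul_eq_mul]
  ring

theorem selfWronskian_comp_const_sub (a : 𝕜) (f : 𝕜 → 𝕜) (x : 𝕜) :
    selfWronskian (fun y => f (a - y)) x = selfWronskian f (a - x) := by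
  have h : deriv (fun y => f (a - y)) = fun y => -deriv f (a - y) := by
    funext y; exact deriv_comp_const_sub f a y
  simp only [selfWronskian, h, deriv.fun_neg, deriv_comp_const_sub]
  ring

theorem selfWronskian_comp_sub_const (a : 𝕜) (f : 𝕜 → 𝕜) (x : 𝕜) :
    selfWronskian (fun y => f (y - a)) x = selfWronskian f (x - a) := by
  have h : deriv (fun y => f (y - a)) = fun y => deriv f (y - a) := by
    funext y; exact deriv_comp_sub_const f a y
  simp only [selfWronskian, h, deriv_comp_sub_const]

theorem selfWronskian_eq_zero_of_deriv_eq_mul_const {f : 𝕜 → 𝕜} {a : 𝕜}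
    (h : deriv f = fun y => f y * a) (x : 𝕜) : selfWronskian f x = 0 := by
  simp only [selfWronskian, h, deriv_mul_const_field']
  ring

theorem selfWronskian_eq_sq_mul_deriv_logDeriv {f : 𝕜 → 𝕜} {x : 𝕜}
    (hf : DifferentiableAt 𝕜 f x) (hf' : DifferentiableAt 𝕜 (deriv f) x) (hx : f x ≠ 0) :
    selfWronskian f x = f x ^ 2 * deriv (logDeriv f) x := by
  rw [logDeriv, (hf'.hasDerivAt.div hf.hasDerivAt hx).deriv, selfWronskian]
  field_simp

theorem selfWronskian_mul [CompleteSpace 𝕜] {f g : 𝕜 → 𝕜} {x : 𝕜}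
    (hf : AnalyticAt 𝕜 f x) (hg : AnalyticAt 𝕜 g x) :
    selfWronskian (fun y => f y * g y) x =
      g x ^ 2 * selfWronskian f x + f x ^ 2 * selfWronskian g x := by
  have hderiv : deriv (fun y => f y * g y) =ᶠ[𝓝 x] fun y => deriv f y * g y + f y * deriv g y := by
    filter_upwards [hf.eventually_analyticAt, hg.eventually_analyticAt] with y hfy hgy
    exact deriv_mul hfy.differentiableAt hgy.differentiableAt
  have hderiv2 : HasDerivAt (fun y => deriv f y * g y + f y * deriv g y)
      (deriv (deriv f) x * g x + deriv f x * deriv g x +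
        (deriv f x * deriv g x + f x * deriv (deriv g) x)) x :=
    (hf.deriv.differentiableAt.hasDerivAt.mul hg.differentiableAt.hasDerivAt).add
    (hf.differentiableAt.hasDerivAt.mul hg.deriv.differentiableAt.hasDerivAt)
  rw [selfWronskian, hderiv.deriv_eq, hderiv.eq_of_nhds, hderiv2.deriv, selfWronskian,
    selfWronskian]
  ring

end SelfWronskian

theorem nu_eq_selfWronskian (s : ℂ) : nu s = selfWronskian riemannZeta s := by
  rw [nu, selfWronskian, iteratedDeriv_succ, iteratedDeriv_one]

theorem selfWronskian_sin (x : ℂ) : selfWronskian sin x = -1 := by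
  simp only [selfWronskian, Complex.deriv_sin, Complex.deriv_cos']
  linear_combination -sin_sq_add_cos_sq x

theorem selfWronskian_sin_const_mul (a x : ℂ) :
    selfWronskian (fun y => sin (a * y)) x = -a ^ 2 := by
  rw [selfWronskian_comp_const_mul, selfWronskian_sin, mul_neg_one]

theorem selfWronskian_const_cpow {c : ℂ} (hc : c ≠ 0) (x : ℂ) :
    selfWronskian (fun y => c ^ y) x = 0 :=
  selfWronskian_eq_zero_of_deriv_eq_mul_const
    (funext fun _ => (hasStrictDerivAt_const_cpow (Or.inl hc)).hasDerivAt.deriv) x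

theorem Complex.analyticAt_Gamma {z : ℂ} (hz : ∀ m : ℕ, z ≠ -m) : AnalyticAt ℂ Gamma z := by
  have hopen : IsOpen {w : ℂ | ∀ m : ℕ, w ≠ -m} := by
    have h : {w : ℂ | ∀ m : ℕ, w ≠ -m} = (((↑) : ℤ → ℂ) '' Set.range fun m : ℕ => -(m : ℤ))ᶜ := by
      ext; simp [eq_comm]
    rw [h]
    exact (isClosedEmbedding_intCast.isClosedMap _ (isClosed_discrete _)).isOpen_compl
  exact DifferentiableOn.analyticAt
    (fun w hw => (differentiableAt_Gamma w hw).differentiableWithinAt) (hopen.mem_nhds hz)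

theorem analyticAt_riemannZeta {s : ℂ} (hs : s ≠ 1) : AnalyticAt ℂ riemannZeta s :=
  DifferentiableOn.analyticAt (fun _ hw => (differentiableAt_riemannZeta hw).differentiableWithinAt)
    (isOpen_ne.mem_nhds hs)

theorem one_sub_ne_neg_natCast {s : ℂ} (hs : ∀ n : ℤ, s ≠ n) (m : ℕ) : 1 - s ≠ -m :=
  fun h => hs (m + 1) (by push_cast; linear_combination -h)

theorem riemannZeta_eq_chi_mul {s : ℂ} (hs : ∀ n : ℕ, s ≠ n) :
    riemannZeta s = chi s * riemannZeta (1 - s) := by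
  have h := riemannZeta_one_sub (s := 1 - s)
    (fun n h => hs (n + 1) (by push_cast; linear_combination -h)) (fun h => hs 0 (by simpa using h))
  rw [sub_sub_cancel, neg_sub,
    show (Real.pi : ℂ) * (1 - s) / 2 = Real.pi / 2 - Real.pi * s / 2 by ring,
    cos_pi_div_two_sub] at h
  rw [h, chi]
  ring

theorem two_mul_pi_mem_slitPlane : 2 * (Real.pi : ℂ) ∈ slitPlane := by
  exact_mod_cast ofReal_mem_slitPlane.mpr (by positivity : (0 : ℝ) < 2 * Real.pi)

theorem analyticAt_chi {s : ℂ} (hs : ∀ m : ℕ, 1 - s ≠ -m) : AnalyticAt ℂ chi s :=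
  ((analyticAt_const.mul (analyticAt_const.cpow (by fun_prop) two_mul_pi_mem_slitPlane)).mul
    (analyticAt_sin.comp (by fun_prop))).mul ((analyticAt_Gamma hs).comp (by fun_prop))

theorem sin_pi_mul_div_two_ne_zero {s : ℂ} (hs : ∀ n : ℤ, s ≠ n) : sin (Real.pi * s / 2) ≠ 0 := by
  rw [Ne, sin_eq_zero_iff]
  rintro ⟨k, hk⟩
  apply hs (2 * k)
  have hpi : (Real.pi : ℂ) ≠ 0 := ofReal_ne_zero.mpr Real.pi_ne_zero
  push_cast
  apply mul_left_cancel₀ hpi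
  linear_combination 2 * hk

theorem selfWronskian_chi {s : ℂ} (hs : ∀ n : ℤ, s ≠ n) :
    selfWronskian chi s = chi s ^ 2 *
      (deriv _root_.digamma (1 - s) - ((Real.pi : ℂ) / 2) ^ 2 * (sin (Real.pi * s / 2))⁻¹ ^ 2) := by
  have hGamma := one_sub_ne_neg_natCast hs
  have hP : AnalyticAt ℂ (fun y : ℂ => (2 * (Real.pi : ℂ)) ^ (y - 1)) s :=
    analyticAt_const.cpow (by fun_prop) two_mul_pi_mem_slitPlane
  have hS : AnalyticAt ℂ (fun y : ℂ => sin (Real.pi * y / 2)) s := analyticAt_sin.comp (by fun_prop)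
  have hG : AnalyticAt ℂ (fun y : ℂ => Gamma (1 - y)) s :=
    (analyticAt_Gamma hGamma).comp (by fun_prop)
  have wP : selfWronskian (fun y : ℂ => (2 * (Real.pi : ℂ)) ^ (y - 1)) s = 0 :=
    (selfWronskian_comp_sub_const 1 (fun y => (2 * (Real.pi : ℂ)) ^ y) s).trans
      (selfWronskian_const_cpow (slitPlane_ne_zero two_mul_pi_mem_slitPlane) _)
  have wS : selfWronskian (fun y : ℂ => sin (Real.pi * y / 2)) s = -((Real.pi : ℂ) / 2) ^ 2 := by
    simp only [mul_div_right_comm _ _ (2 : ℂ), selfWronskian_sin_const_mul]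
  have wG : selfWronskian (fun y : ℂ => Gamma (1 - y)) s =
      Gamma (1 - s) ^ 2 * deriv _root_.digamma (1 - s) := by
    rw [selfWronskian_comp_const_sub, selfWronskian_eq_sq_mul_deriv_logDeriv
      (analyticAt_Gamma hGamma).differentiableAt (analyticAt_Gamma hGamma).deriv.differentiableAt
      (Gamma_ne_zero hGamma)]
    rfl
  have hchi :
      chi = fun y => 2 * ((2 * (Real.pi : ℂ)) ^ (y - 1) * sin (Real.pi * y / 2) * Gamma (1 - y)) := by
    funext y; rw [chi]; ring
  have hsin : sin (Real.pi * s / 2) ^ 2 * (sin (Real.pi * s / 2))⁻¹ ^ 2 = 1 := by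
    rw [← mul_pow, mul_inv_cancel₀ (sin_pi_mul_div_two_ne_zero hs), one_pow]
  rw [chi, hchi, selfWronskian_const_mul, selfWronskian_mul (hP.fun_mul hS) hG,
    selfWronskian_mul hP hS, wP, wS, wG]
  linear_combination
    (4 * ((Real.pi : ℂ) / 2) ^ 2 * ((2 * (Real.pi : ℂ)) ^ (s - 1)) ^ 2 * Gamma (1 - s) ^ 2) * hsin

/-- Functional equation:
`ν(s) = χ(s)²·(ν(1−s) + (ψ'(1−s) − (π/2)²·csc(πs/2)²)·ζ(1−s)²)` for non-integer `s`. -/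
theorem nu_functional_equation (s : ℂ) (hs : ∀ n : ℤ, s ≠ (n : ℂ)) :
    nu s = chi s ^ 2 *
      (nu (1 - s) +
        (deriv _root_.digamma (1 - s)
            - ((Real.pi : ℂ) / 2) ^ 2 * (Complex.sin ((Real.pi : ℂ) * s / 2))⁻¹ ^ 2)
          * riemannZeta (1 - s) ^ 2) := by
  have hnonint : ∀ᶠ y in 𝓝 s, y ∉ Set.range ((↑) : ℤ → ℂ) :=
    isOpen_compl_range_intCast.mem_nhds fun ⟨n, hn⟩ => hs n hn.symm
  have hzeta : riemannZeta =ᶠ[𝓝 s] fun y => chi y * riemannZeta (1 - y) :=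
    hnonint.mono fun y hy => riemannZeta_eq_chi_mul fun n h => hy ⟨n, by simp [h]⟩
  have hchi : AnalyticAt ℂ chi s := analyticAt_chi (one_sub_ne_neg_natCast hs)
  have hzeta' : AnalyticAt ℂ (fun y => riemannZeta (1 - y)) s :=
    (analyticAt_riemannZeta fun h => hs 0 (by simpa using h)).comp (by fun_prop)
  rw [nu_eq_selfWronskian, hzeta.selfWronskian_eq, selfWronskian_mul hchi hzeta',
    selfWronskian_chi hs, selfWronskian_comp_const_sub, ← nu_eq_selfWronskian]
  ring
end

section
/- For every complex number s with Re(s) ≥ 4.25, ν(s) = ζ(s)·ζ''(s) − ζ'(s)² ≠ 0. -/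
open Complex

/-!
For `Re s > 1` we have `ν = ζ² · (ζ'/ζ)'` and `(ζ'/ζ)'(s) = ∑ Λ(n) log n · n⁻ˢ`, so it suffices
that this Dirichlet series does not vanish. Its `n = 2` term `(log 2)² 2⁻ˢ` dominates all the
others together once `σ = Re s ≥ 4`: after scaling by `2^σ` the other terms only decrease in `σ`,
and at `σ = 4` they sum to less than `(log 2)² / 16`, as the terms `n < 8` and the tail bound
`log² n ≤ 4n / e²` show.
-/

open scoped Topology LSeries.notation
open LSeries ArithmeticFunction Finset

theorem tsum_ne_zero_of_tsum_norm_lt_two_mul {ι E : Type*} [NormedAddCommGroup E]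
    [CompleteSpace E] {f : ι → E} (hf : Summable (‖f ·‖)) (k : ι)
    (h : ∑' i, ‖f i‖ < 2 * ‖f k‖) : ∑' i, f i ≠ 0 := by
  classical
  set g : ι → E := fun i => if i = k then 0 else f i
  have hg_norm : (‖g ·‖) = fun i => if i = k then 0 else ‖f i‖ := by
    ext i; by_cases hi : i = k <;> simp [g, hi]
  have hg : Summable (‖g ·‖) := hg_norm ▸ hf.of_nonneg_of_le (fun _ => by split_ifs <;> simp)
    (fun i => by split_ifs <;> simp)
  intro h0
  have hk : f k = -∑' i, g i := eq_neg_of_add_eq_zero_left <| by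
    rw [← h0]; exact (hf.of_norm.tsum_eq_add_tsum_ite k).symm
  have hsplit : ∑' i, ‖f i‖ = ‖f k‖ + ∑' i, ‖g i‖ := by
    rw [hg_norm]; exact hf.tsum_eq_add_tsum_ite k
  have hk_le : ‖f k‖ ≤ ∑' i, ‖g i‖ := by rw [hk, norm_neg]; exact norm_tsum_le_tsum_norm hg
  linarith

theorem Real.log_sq_le_four_div_exp_two_mul {x : ℝ} (hx : 1 ≤ x) :
    Real.log x ^ 2 ≤ 4 / Real.exp 2 * x := by
  have hx0 : 0 < x := by linarith
  have hsqrt : 0 < √x := Real.sqrt_pos.mpr hx0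
  have hlog_sqrt : Real.log √x ≤ √x / Real.exp 1 := by
    have := Real.log_le_sub_one_of_pos (div_pos hsqrt (Real.exp_pos 1))
    rw [Real.log_div hsqrt.ne' (Real.exp_pos 1).ne', Real.log_exp] at this
    linarith
  have hlog_sqrt_nonneg : 0 ≤ Real.log √x := Real.log_nonneg (Real.one_le_sqrt.mpr hx)
  calc Real.log x ^ 2 = 4 * Real.log √x ^ 2 := by rw [Real.log_sqrt hx0.le]; ring
    _ ≤ 4 * (√x / Real.exp 1) ^ 2 := by gcongr
    _ = 4 / Real.exp 2 * x := by
      rw [div_pow, Real.sq_sqrt hx0.le, ← Real.exp_nat_mul]; norm_num; ring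

theorem sum_range_one_div_add_pow_three_le {N : ℝ} (hN : 1 < N) (n : ℕ) :
    ∑ i ∈ range n, 1 / ((i : ℝ) + N) ^ 3 ≤ 1 / (2 * (N - 1) * N) := by
  set g : ℕ → ℝ := fun i => 1 / (2 * ((i : ℝ) + N - 1) * ((i : ℝ) + N))
  have hg_nonneg : 0 ≤ g n := by
    have : 0 < (n : ℝ) + N - 1 := by linarith [n.cast_nonneg (α := ℝ)]
    simp only [g]; positivity
  have hcube {m : ℝ} (hm : 1 < m) :
      1 / m ^ 3 ≤ 1 / (2 * (m - 1) * m) - 1 / (2 * m * (m + 1)) := by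
    have hm0 : m - 1 ≠ 0 := by linarith
    rw [show 1 / (2 * (m - 1) * m) - 1 / (2 * m * (m + 1)) = 1 / ((m - 1) * m * (m + 1)) by
      field_simp; ring]
    gcongr
    nlinarith
  have hstep (i : ℕ) : 1 / ((i : ℝ) + N) ^ 3 ≤ g i - g (i + 1) := by
    convert hcube (m := (i : ℝ) + N) (by linarith [i.cast_nonneg (α := ℝ)]) using 3
    push_cast
    ring
  calc ∑ i ∈ range n, 1 / ((i : ℝ) + N) ^ 3 ≤ ∑ i ∈ range n, (g i - g (i + 1)) :=
        sum_le_sum fun i _ => hstep i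
    _ = g 0 - g n := sum_range_sub' g n
    _ ≤ g 0 := sub_le_self _ hg_nonneg
    _ = 1 / (2 * (N - 1) * N) := by simp [g]

theorem LSeries.norm_term_le_two_rpow_mul {f : ℕ → ℂ} (hf : f 1 = 0) {s s₀ : ℂ}
    (h : s₀.re ≤ s.re) (n : ℕ) : ‖term f s n‖ ≤ 2 ^ (s₀.re - s.re) * ‖term f s₀ n‖ := by
  rcases lt_or_ge n 2 with hn | hn
  · interval_cases n <;> simp [hf]
  have hn0 : (0 : ℝ) < n := by positivity
  have h2n : (2 : ℝ) ^ (s.re - s₀.re) ≤ (n : ℝ) ^ (s.re - s₀.re) :=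
    Real.rpow_le_rpow (by norm_num) (by exact_mod_cast hn) (by linarith)
  have hsplit : (n : ℝ) ^ s.re = n ^ s₀.re * n ^ (s.re - s₀.re) := by
    rw [← Real.rpow_add hn0]; ring_nf
  rw [norm_term_eq, norm_term_eq, if_neg (by omega), if_neg (by omega)]
  calc ‖f n‖ / n ^ s.re = ‖f n‖ / n ^ s₀.re / n ^ (s.re - s₀.re) := by rw [hsplit, div_div]
    _ ≤ ‖f n‖ / n ^ s₀.re / 2 ^ (s.re - s₀.re) := by gcongr
    _ = 2 ^ (s₀.re - s.re) * (‖f n‖ / n ^ s₀.re) := by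
      rw [← neg_sub, Real.rpow_neg zero_le_two, div_eq_inv_mul, inv_inv]

namespace ArithmeticFunction

theorem abscissaOfAbsConv_vonMangoldt_le_one : abscissaOfAbsConv ↗Λ ≤ 1 :=
  abscissaOfAbsConv_le_of_forall_lt_LSeriesSummable fun _ hy =>
    LSeriesSummable_vonMangoldt (by simpa using hy)

theorem norm_term_logMul_vonMangoldt (s : ℂ) (n : ℕ) :
    ‖term (logMul ↗Λ) s n‖ = Λ n * Real.log n / n ^ s.re := by
  rcases eq_or_ne n 0 with rfl | hn
  · simp
  rw [norm_term_eq, if_neg hn, logMul, ← natCast_log, norm_mul, norm_real, norm_real,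
    Real.norm_of_nonneg (Real.log_natCast_nonneg n), Real.norm_of_nonneg vonMangoldt_nonneg,
    mul_comm]

theorem vonMangoldt_mul_log_div_pow_four_le (n : ℕ) :
    Λ n * Real.log n / n ^ 4 ≤ 4 / Real.exp 2 / n ^ 3 := by
  rcases eq_or_ne n 0 with rfl | hn
  · simp
  have hn1 : (1 : ℝ) ≤ n := by exact_mod_cast Nat.one_le_iff_ne_zero.mpr hn
  calc Λ n * Real.log n / n ^ 4 ≤ Real.log n ^ 2 / n ^ 4 := by
        rw [sq]; gcongr; exact vonMangoldt_le_log
    _ ≤ 4 / Real.exp 2 * n / n ^ 4 := by gcongr; exact Real.log_sq_le_four_div_exp_two_mul hn1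
    _ = 4 / Real.exp 2 / n ^ 3 := by field_simp

theorem vonMangoldt_mul_log_div_pow_four_nonneg (n : ℕ) : 0 ≤ Λ n * Real.log n / n ^ 4 := by
  have := Real.log_natCast_nonneg n
  have : 0 ≤ Λ n := vonMangoldt_nonneg
  positivity

theorem summable_vonMangoldt_mul_log_div_pow_four :
    Summable fun n : ℕ => Λ n * Real.log n / n ^ 4 :=
  ((Real.summable_one_div_nat_pow.mpr (by norm_num : 1 < 3)).mul_left
    (4 / Real.exp 2)).of_nonneg_of_le vonMangoldt_mul_log_div_pow_four_nonneg fun n => by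
      simpa [div_eq_mul_inv] using vonMangoldt_mul_log_div_pow_four_le n

theorem sum_range_eight_vonMangoldt_mul_log_div_pow_four :
    ∑ n ∈ range 8, Λ n * Real.log n / n ^ 4 = Real.log 2 ^ 2 / 16 + Real.log 3 ^ 2 / 81
      + Real.log 2 ^ 2 / 128 + Real.log 5 ^ 2 / 625 + Real.log 7 ^ 2 / 2401 := by
  have h4 : Λ 4 = Real.log 2 := by
    rw [show 4 = 2 ^ 2 by rfl, vonMangoldt_apply_pow two_ne_zero,
      vonMangoldt_apply_prime Nat.prime_two, Nat.cast_ofNat]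
  have h6 : Λ 6 = 0 := vonMangoldt_eq_zero_iff.mpr (by decide)
  simp only [sum_range_succ, sum_range_zero, vonMangoldt_apply_prime Nat.prime_two,
    vonMangoldt_apply_prime Nat.prime_three, vonMangoldt_apply_prime Nat.prime_five,
    vonMangoldt_apply_prime (by norm_num : Nat.Prime 7), h4, h6]
  norm_num [Real.log_four_eq]
  ring

theorem tsum_vonMangoldt_mul_log_div_pow_four_lt :
    ∑' n : ℕ, Λ n * Real.log n / n ^ 4 < Real.log 2 ^ 2 / 8 := by
  have htail : ∑' n, Λ (n + 8) * Real.log ↑(n + 8) / ↑(n + 8) ^ 4 ≤ 4 / Real.exp 2 / 112 := by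
    refine Real.tsum_le_of_sum_range_le (fun n => vonMangoldt_mul_log_div_pow_four_nonneg _)
      fun n => ?_
    calc ∑ i ∈ range n, Λ (i + 8) * Real.log ↑(i + 8) / ↑(i + 8) ^ 4
        ≤ ∑ i ∈ range n, 4 / Real.exp 2 * (1 / ((i : ℝ) + 8) ^ 3) :=
          sum_le_sum fun i _ => by
            simpa [div_eq_mul_inv] using vonMangoldt_mul_log_div_pow_four_le (i + 8)
      _ ≤ 4 / Real.exp 2 * (1 / (2 * (8 - 1) * 8)) := by
          rw [← mul_sum]; gcongr; exact sum_range_one_div_add_pow_three_le (by norm_num) n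
      _ = 4 / Real.exp 2 / 112 := by ring
  rw [← summable_vonMangoldt_mul_log_div_pow_four.sum_add_tsum_nat_add 8,
    sum_range_eight_vonMangoldt_mul_log_div_pow_four]
  have hlog2 : 0.48045 < Real.log 2 ^ 2 := by nlinarith [Real.log_two_gt_d9]
  have hlog3 : Real.log 3 ^ 2 < 1.207 := by nlinarith [Real.log_three_lt_d9, Real.log_three_gt_d9]
  have hlog5 : Real.log 5 ^ 2 < 2.5904 := by nlinarith [Real.log_five_lt_d9, Real.log_five_gt_d9]
  have hlog7 : Real.log 7 ^ 2 ≤ 9 * Real.log 2 ^ 2 := by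
    have h78 : Real.log 7 ≤ 3 * Real.log 2 := by
      rw [← Real.log_rpow two_pos]; exact Real.log_le_log (by norm_num) (by norm_num)
    nlinarith [Real.log_nonneg (by norm_num : (1 : ℝ) ≤ 7), Real.log_two_gt_d9]
  have hexp : 7.389 < Real.exp 2 := by
    rw [show (2 : ℝ) = 1 + 1 by norm_num, Real.exp_add]
    nlinarith [Real.exp_one_gt_d9]
  have hexp_inv : 4 / Real.exp 2 / 112 < 0.004834 := by
    rw [div_div, div_lt_iff₀ (by positivity)]; linarith
  linarith

theorem LSeries_logMul_vonMangoldt_ne_zero {s : ℂ} (hs : 4 ≤ s.re) :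
    LSeries (logMul ↗Λ) s ≠ 0 := by
  have hterm (n : ℕ) :
      ‖term (logMul ↗Λ) s n‖ ≤ 2 ^ (4 - s.re) * (Λ n * Real.log n / n ^ 4) := by
    simpa [norm_term_logMul_vonMangoldt] using
      norm_term_le_two_rpow_mul (f := logMul ↗Λ) (s := s) (s₀ := 4) (by simp [logMul])
        (by norm_num [hs]) n
  have hmajorant := summable_vonMangoldt_mul_log_div_pow_four.mul_left (2 ^ (4 - s.re))
  have hsum : Summable (‖term (logMul ↗Λ) s ·‖) :=
    hmajorant.of_nonneg_of_le (fun _ => norm_nonneg _) hterm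
  refine tsum_ne_zero_of_tsum_norm_lt_two_mul hsum 2 ?_
  calc ∑' n, ‖term (logMul ↗Λ) s n‖ ≤ ∑' n : ℕ, 2 ^ (4 - s.re) * (Λ n * Real.log n / n ^ 4) :=
        hsum.tsum_le_tsum hterm hmajorant
    _ = 2 ^ (4 - s.re) * ∑' n : ℕ, Λ n * Real.log n / n ^ 4 := tsum_mul_left
    _ < 2 ^ (4 - s.re) * (Real.log 2 ^ 2 / 8) := by
        gcongr; exact tsum_vonMangoldt_mul_log_div_pow_four_lt
    _ = 2 * ‖term (logMul ↗Λ) s 2‖ := by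
        rw [norm_term_logMul_vonMangoldt, vonMangoldt_apply_prime Nat.prime_two,
          Real.rpow_sub two_pos]
        norm_num
        ring

end ArithmeticFunction

theorem LSeries_logMul_vonMangoldt_eq_nu_div {s : ℂ} (hs : 1 < s.re) :
    LSeries (logMul ↗Λ) s = nu s / riemannZeta s ^ 2 := by
  have hs1 : s ≠ 1 := by rintro rfl; norm_num at hs
  have hζ : DifferentiableAt ℂ riemannZeta s := differentiableAt_riemannZeta hs1
  have hζ' : DifferentiableAt ℂ (deriv riemannZeta) s := by
    have : DifferentiableOn ℂ riemannZeta {1}ᶜ := fun z hz =>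
      (differentiableAt_riemannZeta hz).differentiableWithinAt
    exact ((this.analyticOnNhd isOpen_compl_singleton).deriv s hs1).differentiableAt
  have hL : LSeries ↗Λ =ᶠ[𝓝 s] fun z => -deriv riemannZeta z / riemannZeta z :=
    Filter.eventually_of_mem ((isOpen_lt continuous_const continuous_re).mem_nhds hs)
      fun z hz => LSeries_vonMangoldt_eq_deriv_riemannZeta_div hz
  have habs : abscissaOfAbsConv ↗Λ < s.re :=
    abscissaOfAbsConv_vonMangoldt_le_one.trans_lt (by exact_mod_cast hs)
  rw [← neg_neg (LSeries _ s), ← LSeries_deriv habs, hL.deriv_eq,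
    deriv_fun_div (c := fun z => -deriv riemannZeta z) hζ'.neg hζ
      (riemannZeta_ne_zero_of_one_lt_re hs), deriv.fun_neg, nu,
    iteratedDeriv_succ, iteratedDeriv_one]
  ring

/-- Zero-free region: `ν(s) ≠ 0` for `Re(s) ≥ 4.25`. -/
theorem nu_ne_zero_of_re_ge (s : ℂ) (hs : (4.25 : ℝ) ≤ s.re) : nu s ≠ 0 := by
  have hs4 : 4 ≤ s.re := le_trans (by norm_num) hs
  intro hnu
  apply LSeries_logMul_vonMangoldt_ne_zero hs4
  rw [LSeries_logMul_vonMangoldt_eq_nu_div (by linarith), hnu, zero_div]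
end
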